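/- Λ(Y|X) = 1 if and only if Y is completely separated relative to X, that is, if and only if Ψ(κ(x₁), κ(x₂)) ∈ {0, 1} for (μ_X ⊗ μ_X)-almost all (x₁, x₂) with x₁ ≠ x₂. -/

import Mathlib

open MeasureTheory ProbabilityTheory Set Filter Topology

/-- The (nonparametric) relative effect `Ψ(μ, ν) = ∫ μ((-∞,y)) + (1/2) μ({y}) dν(y)`. -/
noncomputable def relEffect (μ ν : Measure ℝ) : ℝ :=
  ∫ y, ((μ (Set.Iio y)).toReal + (1 / 2) * (μ {y}).toReal) ∂ν

/-- `α(μ) = 1 - ∫ μ({x}) dμ(x) = 1 - P(X = X*)`, the non-discrete mass of `μ`. -/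
noncomputable def alphaCoeff {E : Type*} [MeasurableSpace E] (μ : Measure E) : ℝ :=
  1 - ∫ x, (μ {x}).toReal ∂μ

/-- The coefficient of separation `Λ(Y|X)`. -/
noncomputable def sepCoeff {Ω E : Type*} [MeasurableSpace Ω] [MeasurableSpace E]
    (P : Measure Ω) [IsFiniteMeasure P] (Y : Ω → ℝ) (X : Ω → E) : ℝ :=
  (alphaCoeff (P.map X))⁻¹ *
    ∫ x : E × E,
      (relEffect (condDistrib Y X P x.1) (condDistrib Y X P x.2)
        - relEffect (condDistrib Y X P x.2) (condDistrib Y X P x.1)) ^ 2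
      ∂((P.map X).prod (P.map X))

/-- A random variable is non-degenerate if it is not a.s. constant. -/
def Nondegenerate {Ω α : Type*} [MeasurableSpace Ω] (P : Measure Ω) (Z : Ω → α) : Prop :=
  ¬ ∃ c, ∀ᵐ ω ∂P, Z ω = c

/-- `Y` is completely separated relative to `X`. -/
def CompletelySeparated {Ω E : Type*} [MeasurableSpace Ω] [MeasurableSpace E]
    (P : Measure Ω) [IsFiniteMeasure P] (Y : Ω → ℝ) (X : Ω → E) : Prop :=
  ∀ᵐ x : E × E ∂((P.map X).prod (P.map X)), x.1 ≠ x.2 →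
    relEffect (condDistrib Y X P x.1) (condDistrib Y X P x.2) = 0 ∨
    relEffect (condDistrib Y X P x.1) (condDistrib Y X P x.2) = 1

/-!
For probability measures `Ψ(μ, ν) + Ψ(ν, μ) = 1`: integrate `c(x, y) + c(y, x) = 1`, where `c(x, y)`
is `1`, `1/2`, `0` according as `x < y`, `x = y`, `x > y`, and swap the order of integration.
Hence the integrand of `Λ` is `(2Ψ - 1)² ∈ [0, 1]`; it vanishes on the diagonal and equals `1`
exactly where `Ψ ∈ {0, 1}`. As `α(X)` is the `μ_X ⊗ μ_X`-mass of the off-diagonal, `Λ = 1` says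
that the integrand and the indicator of the off-diagonal, which dominates it, have the same
integral, i.e. agree almost everywhere.
-/

open scoped ENNReal

noncomputable def halfTieIndicator (x y : ℝ) : ℝ≥0∞ :=
  (Iio y).indicator 1 x + (1 / 2) * ({y} : Set ℝ).indicator 1 x

lemma measurable_halfTieIndicator : Measurable (Function.uncurry halfTieIndicator) := by
  have hlt : MeasurableSet {p : ℝ × ℝ | p.1 < p.2} :=
    measurableSet_lt measurable_fst measurable_snd
  have heq : MeasurableSet {p : ℝ × ℝ | p.1 = p.2} := measurableSet_diagonal
  exact (measurable_one.indicator hlt).add ((measurable_one.indicator heq).const_mul _)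

lemma halfTieIndicator_add_swap (x y : ℝ) : halfTieIndicator x y + halfTieIndicator y x = 1 := by
  rcases lt_trichotomy x y with h | rfl | h
  · simp [halfTieIndicator, h, h.not_gt, h.ne, h.ne']
  · simp [halfTieIndicator, ENNReal.inv_two_add_inv_two]
  · simp [halfTieIndicator, h, h.not_gt, h.ne, h.ne']

lemma lintegral_halfTieIndicator (μ : Measure ℝ) (y : ℝ) :
    ∫⁻ x, halfTieIndicator x y ∂μ = μ (Iio y) + (1 / 2) * μ {y} := by
  simp only [halfTieIndicator]
  rw [lintegral_add_left (measurable_one.indicator measurableSet_Iio),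
    lintegral_const_mul _ (measurable_one.indicator (measurableSet_singleton y)),
    lintegral_indicator_one measurableSet_Iio, lintegral_indicator_one (measurableSet_singleton y)]

lemma measurable_lintegral_halfTieIndicator (μ : Measure ℝ) [SFinite μ] :
    Measurable fun y => ∫⁻ x, halfTieIndicator x y ∂μ :=
  measurable_halfTieIndicator.lintegral_prod_left'

lemma relEffect_eq_toReal_lintegral (μ ν : Measure ℝ) [IsFiniteMeasure μ] :
    relEffect μ ν = (∫⁻ y, ∫⁻ x, halfTieIndicator x y ∂μ ∂ν).toReal := by
  have hfin (y : ℝ) : ∫⁻ x, halfTieIndicator x y ∂μ < ∞ := by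
    rw [lintegral_halfTieIndicator]
    exact ENNReal.add_lt_top.2
      ⟨measure_lt_top _ _, ENNReal.mul_lt_top (by simp) (measure_lt_top _ _)⟩
  rw [← integral_toReal (measurable_lintegral_halfTieIndicator μ).aemeasurable
    (ae_of_all _ hfin), relEffect]
  refine integral_congr_ae (ae_of_all _ fun y => ?_)
  dsimp only
  rw [lintegral_halfTieIndicator, ENNReal.toReal_add (measure_ne_top _ _)
    (ENNReal.mul_ne_top (by simp) (measure_ne_top _ _)), ENNReal.toReal_mul]
  norm_num

lemma lintegral_halfTieIndicator_add_swap (μ ν : Measure ℝ) [IsProbabilityMeasure μ]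
    [IsProbabilityMeasure ν] :
    ∫⁻ y, ∫⁻ x, halfTieIndicator x y ∂μ ∂ν + ∫⁻ x, ∫⁻ y, halfTieIndicator y x ∂ν ∂μ = 1 := by
  rw [lintegral_lintegral_swap (μ := μ) (ν := ν) (f := fun x y => halfTieIndicator y x)
      (measurable_halfTieIndicator.comp measurable_swap).aemeasurable,
    ← lintegral_add_left (measurable_lintegral_halfTieIndicator μ)]
  have hinner (y : ℝ) : ∫⁻ x, halfTieIndicator x y ∂μ + ∫⁻ x, halfTieIndicator y x ∂μ = 1 := by
    rw [← lintegral_add_left (f := fun x => halfTieIndicator x y)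
      (measurable_halfTieIndicator.comp measurable_prodMk_right)]
    simp [halfTieIndicator_add_swap]
  simp [hinner]

lemma relEffect_add_relEffect_swap (μ ν : Measure ℝ) [IsProbabilityMeasure μ]
    [IsProbabilityMeasure ν] : relEffect μ ν + relEffect ν μ = 1 := by
  have hsum := lintegral_halfTieIndicator_add_swap μ ν
  rw [relEffect_eq_toReal_lintegral, relEffect_eq_toReal_lintegral,
    ← ENNReal.toReal_add (ne_top_of_le_ne_top ENNReal.one_ne_top (hsum ▸ le_self_add))
      (ne_top_of_le_ne_top ENNReal.one_ne_top (hsum ▸ le_add_self)), hsum, ENNReal.toReal_one]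

lemma relEffect_nonneg (μ ν : Measure ℝ) : 0 ≤ relEffect μ ν :=
  integral_nonneg fun _ => by positivity

section ProbabilityMeasures

variable (μ ν : Measure ℝ) [IsProbabilityMeasure μ] [IsProbabilityMeasure ν]

lemma sq_relEffect_sub_relEffect_swap_le_one : (relEffect μ ν - relEffect ν μ) ^ 2 ≤ 1 := by
  have := relEffect_add_relEffect_swap μ ν
  nlinarith [relEffect_nonneg μ ν, relEffect_nonneg ν μ]

lemma sq_relEffect_sub_relEffect_swap_eq_one_iff :
    (relEffect μ ν - relEffect ν μ) ^ 2 = 1 ↔ relEffect μ ν = 0 ∨ relEffect μ ν = 1 := by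
  rw [eq_sub_of_add_eq' (relEffect_add_relEffect_swap μ ν)]
  constructor
  · intro h
    have : relEffect μ ν * (relEffect μ ν - 1) = 0 := by linear_combination h / 4
    rcases mul_eq_zero.1 this with h0 | h1
    exacts [Or.inl h0, Or.inr (sub_eq_zero.1 h1)]
  · rintro (h | h) <;> rw [h] <;> norm_num

end ProbabilityMeasures

section Kernel

variable {α : Type*} [MeasurableSpace α]

lemma ProbabilityTheory.Kernel.measurable_apply_prodMk_preimage {β γ : Type*}
    [MeasurableSpace β] [MeasurableSpace γ] (κ : Kernel α β) [IsSFiniteKernel κ] {t : Set (γ × β)}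
    (ht : MeasurableSet t) : Measurable fun p : α × γ => κ p.1 (Prod.mk p.2 ⁻¹' t) :=
  Kernel.measurable_kernel_prodMk_left (κ := κ.comap Prod.fst measurable_fst)
    (t := {q : (α × γ) × β | (q.1.2, q.2) ∈ t})
    (ht.preimage ((measurable_snd.comp measurable_fst).prodMk measurable_snd))

lemma measurable_relEffect (κ η : Kernel α ℝ) [IsSFiniteKernel κ] [IsSFiniteKernel η] :
    Measurable fun a => relEffect (κ a) (η a) := by
  have hlt : Measurable fun p : α × ℝ => κ p.1 (Iio p.2) :=
    κ.measurable_apply_prodMk_preimage (measurableSet_lt measurable_snd measurable_fst)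
  have heq : Measurable fun p : α × ℝ => κ p.1 {p.2} :=
    κ.measurable_apply_prodMk_preimage (measurableSet_eq_fun measurable_snd measurable_fst)
  exact (hlt.ennreal_toReal.add (heq.ennreal_toReal.const_mul _)).stronglyMeasurable
    |>.integral_kernel_prod_right' (κ := η) |>.measurable

lemma measurable_relEffect_fst_snd (κ : Kernel α ℝ) [IsSFiniteKernel κ] :
    Measurable fun z : α × α => relEffect (κ z.1) (κ z.2) :=
  measurable_relEffect (κ.comap Prod.fst measurable_fst) (κ.comap Prod.snd measurable_snd)

end Kernel

section Diagonal

variable {E : Type*} [MeasurableSpace E] [MeasurableEq E]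

lemma alphaCoeff_eq_measureReal_compl_diagonal (μ : Measure E) [IsProbabilityMeasure μ] :
    alphaCoeff μ = (μ.prod μ).real (diagonal E)ᶜ := by
  have hsection (x : E) : Prod.mk x ⁻¹' diagonal E = {x} := by
    ext y
    simp [eq_comm]
  have hmeas : Measurable fun x => μ {x} := by
    simpa only [hsection] using measurable_measure_prodMk_left (ν := μ) measurableSet_diagonal
  rw [alphaCoeff, measureReal_compl measurableSet_diagonal, probReal_univ, measureReal_def,
    Measure.prod_apply measurableSet_diagonal]
  simp only [hsection]
  rw [integral_toReal hmeas.aemeasurable (ae_of_all _ fun _ => measure_lt_top _ _)]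

lemma alphaCoeff_pos (μ : Measure E) [IsProbabilityMeasure μ] (hμ : Nondegenerate μ id) :
    0 < alphaCoeff μ := by
  rw [alphaCoeff_eq_measureReal_compl_diagonal, measureReal_def]
  refine ENNReal.toReal_pos (fun h => hμ ?_) (measure_ne_top _ _)
  have hdiag : ∀ᵐ z ∂μ.prod μ, z.1 = z.2 := measure_eq_zero_iff_ae_notMem.1 h |>.mono
    fun _ hz => not_not.1 hz
  obtain ⟨c, hc⟩ := (Measure.ae_ae_of_ae_prod hdiag).exists
  exact ⟨c, hc.mono fun _ h => h.symm⟩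

end Diagonal

lemma Nondegenerate.of_comp {Ω α β : Type*} [MeasurableSpace Ω] {P : Measure Ω} {Z : Ω → α}
    (f : α → β) (h : Nondegenerate P (f ∘ Z)) : Nondegenerate P Z :=
  fun ⟨c, hc⟩ => h ⟨f c, hc.mono fun _ hω => congrArg f hω⟩

lemma Nondegenerate.map_id {Ω α : Type*} [MeasurableSpace Ω] [MeasurableSpace α]
    {P : Measure Ω} {Z : Ω → α} (hZ : AEMeasurable Z P) (h : Nondegenerate P Z) :
    Nondegenerate (P.map Z) id :=
  fun ⟨c, hc⟩ => h ⟨c, ae_of_ae_map hZ hc⟩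

lemma integral_sq_relEffect_sub_eq_measureReal_iff {E : Type*} [MeasurableSpace E]
    [MeasurableEq E] (κ : Kernel E ℝ) [IsMarkovKernel κ] (ν : Measure (E × E))
    [IsFiniteMeasure ν] :
    ∫ z, (relEffect (κ z.1) (κ z.2) - relEffect (κ z.2) (κ z.1)) ^ 2 ∂ν =
        ν.real (diagonal E)ᶜ ↔
      ∀ᵐ z ∂ν, z.1 ≠ z.2 → relEffect (κ z.1) (κ z.2) = 0 ∨ relEffect (κ z.1) (κ z.2) = 1 := by
  set g := fun z : E × E => (relEffect (κ z.1) (κ z.2) - relEffect (κ z.2) (κ z.1)) ^ 2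
  have hg_le (z : E × E) : g z ≤ (diagonal E)ᶜ.indicator 1 z := by
    by_cases hz : z.1 = z.2
    · simp [g, hz, mem_diagonal_iff]
    · simpa [g, hz, mem_diagonal_iff] using
        sq_relEffect_sub_relEffect_swap_le_one (κ z.1) (κ z.2)
  have hg_meas : Measurable g :=
    ((measurable_relEffect_fst_snd κ).sub
      ((measurable_relEffect_fst_snd κ).comp measurable_swap)).pow_const 2
  have hg_int : Integrable g ν := by
    refine (integrable_const (1 : ℝ)).mono' hg_meas.aestronglyMeasurable
      (ae_of_all _ fun z => ?_)
    rw [Real.norm_eq_abs, abs_of_nonneg (sq_nonneg _)]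
    exact (hg_le z).trans (indicator_le_self' (by simp) z)
  rw [← integral_indicator_one measurableSet_diagonal.compl,
    integral_eq_iff_of_ae_le hg_int
      ((integrable_const 1).indicator measurableSet_diagonal.compl) (ae_of_all _ hg_le)]
  refine eventually_congr (ae_of_all _ fun z => ?_)
  by_cases hz : z.1 = z.2
  · simp [g, hz, mem_diagonal_iff]
  · simpa [g, hz, mem_diagonal_iff] using
      sq_relEffect_sub_relEffect_swap_eq_one_iff (κ z.1) (κ z.2)

theorem sepCoeff_eq_one_iff_completelySeparated_general
    {Ω : Type*} [MeasurableSpace Ω] {p : ℕ}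
    (P : Measure Ω) [IsProbabilityMeasure P]
    (X : Ω → (Fin p → ℝ)) (Y : Ω → ℝ)
    (hX : Measurable X)
    (hXnd : ∃ k, Nondegenerate P fun ω => X ω k) :
    sepCoeff P Y X = 1 ↔ CompletelySeparated P Y X := by
  have : IsProbabilityMeasure (P.map X) := Measure.isProbabilityMeasure_map hX.aemeasurable
  obtain ⟨k, hk⟩ := hXnd
  have hα : 0 < alphaCoeff (P.map X) :=
    alphaCoeff_pos _ ((hk.of_comp fun x => x k).map_id hX.aemeasurable)
  rw [sepCoeff, inv_mul_eq_one₀ hα.ne', alphaCoeff_eq_measureReal_compl_diagonal, eq_comm]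
  exact integral_sq_relEffect_sub_eq_measureReal_iff _ _

/-- `Λ(Y|X) = 1` iff `Y` is completely separated relative to `X`. -/
theorem sepCoeff_eq_one_iff_completelySeparated
    {Ω : Type*} [MeasurableSpace Ω] {p : ℕ} (hp : 1 ≤ p)
    (P : Measure Ω) [IsProbabilityMeasure P]
    (X : Ω → (Fin p → ℝ)) (Y : Ω → ℝ)
    (hX : Measurable X) (hY : Measurable Y)
    (hXnd : ∃ k, Nondegenerate P fun ω => X ω k)
    (hYnd : Nondegenerate P Y) :
    sepCoeff P Y X = 1 ↔ CompletelySeparated P Y X :=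
  sepCoeff_eq_one_iff_completelySeparated_general P X Y hX hXnd
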